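/- For every p ∈ (0,1) and every real z > 1−p, setting p̂ := p·z/(1 − p + p·z) ∈ (0,1), one has E[z^{−J_p}] = E[(p̂/p)^{−R_{p̂}}] < ∞, where R_{p̂} is a random variable with P(R_{p̂} = r) = p̂·q_r·∏_{i=1}^{r−1}(1 − p̂·q_i) for r ≥ 1. Equivalently, as convergent series, ∑_{r=1}^{∞} z^{1−r}·p·q_r·∏_{i=1}^{r−1}(1 − p + p·z·(1−q_i)) = ∑_{r=1}^{∞} ((1−p+p·z)/z)^r · (p·z/(1−p+p·z)) · q_r · ∏_{i=1}^{r−1}(1 − p̂·q_i) < ∞. -/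

import Mathlib

/-!
On the event `R = m + 1` the trials `1, …, m` fail and trial `m + 1` succeeds, and a failed trial `i`
contributes the factor `z⁻¹` to `z ^ (-J)` exactly when `W i = 0`. So `z ^ (-J) · 1{R = m + 1}` is a
product of functions of the independent pairs `(W i, ξ i)`, with expectation
`p q (m + 1) ∏_{i ≤ m} (p (1 - q i) + (1 - p) z⁻¹)`. The second Borel–Cantelli lemma gives `R ≥ 1`
almost surely, so summing over `m` computes `E[z ^ (-J)]`; the series converges by the ratio test since
the factors tend to `(1 - p) z⁻¹ < 1`, and the two other forms of the series agree with it term by term.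
-/

open MeasureTheory ProbabilityTheory ENNReal Finset Filter Topology

namespace ProbabilityTheory

variable {Ω : Type*} [MeasurableSpace Ω] {P : Measure Ω}

theorem iIndepFun.curry {ι κ 𝓧 : Type*} [MeasurableSpace 𝓧] {X : ι × κ → Ω → 𝓧}
    (hX : ∀ p, Measurable (X p)) (h : iIndepFun X P) :
    iIndepFun (fun i ω j ↦ X (i, j) ω) P := by
  have := h.isProbabilityMeasure
  have : ∀ p, IsProbabilityMeasure (P.map (X p)) := fun p ↦
    Measure.isProbabilityMeasure_map (hX p).aemeasurable
  have hrow : ∀ i, P.map (fun ω j ↦ X (i, j) ω) = Measure.infinitePi fun j ↦ P.map (X (i, j)) :=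
    fun i ↦ (h.precomp (Prod.mk_right_injective i)).map_fun_eq_infinitePi_map fun j ↦ hX (i, j)
  rw [iIndepFun_iff_map_fun_eq_infinitePi_map (by fun_prop)]
  calc P.map (fun ω i j ↦ X (i, j) ω)
      = (P.map fun ω p ↦ X p ω).map (MeasurableEquiv.curry ι κ 𝓧) := by
        rw [Measure.map_map (by fun_prop) (by fun_prop)]
        rfl
    _ = Measure.infinitePi fun i ↦ Measure.infinitePi fun j ↦ P.map (X (i, j)) := by
        rw [h.map_fun_eq_infinitePi_map hX]
        exact Measure.infinitePi_map_curry fun i j ↦ P.map (X (i, j))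
    _ = Measure.infinitePi fun i ↦ P.map (fun ω j ↦ X (i, j) ω) := by simp_rw [hrow]

theorem iIndepFun.prodMk_sumElim {ι β : Type*} [MeasurableSpace β] {f g : ι → Ω → β}
    (hf : ∀ i, Measurable (f i)) (hg : ∀ i, Measurable (g i)) (h : iIndepFun (Sum.elim f g) P) :
    iIndepFun (fun i ω ↦ (f i ω, g i ω)) P := by
  let e := (Equiv.prodComm ι Bool).trans (Equiv.boolProdEquivSum ι)
  have hcurry := (h.precomp e.injective).curry fun p ↦ by
    rcases p with ⟨i, _ | _⟩
    exacts [hf i, hg i]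
  exact hcurry.comp (fun _ v ↦ (v false, v true)) fun _ ↦ by fun_prop

theorem lintegral_prod_mul_eq_of_iIndepFun {ι α : Type*} [MeasurableSpace α] [DecidableEq ι]
    {Y : ι → Ω → α} (hY : iIndepFun Y P) (hYm : ∀ i, Measurable (Y i)) {s : Finset ι} {j : ι}
    (hj : j ∉ s) {f : ι → α → ℝ≥0∞} {g : α → ℝ≥0∞} (hf : ∀ i, Measurable (f i))
    (hg : Measurable g) :
    ∫⁻ ω, (∏ i ∈ s, f i (Y i ω)) * g (Y j ω) ∂P =
      (∏ i ∈ s, ∫⁻ ω, f i (Y i ω) ∂P) * ∫⁻ ω, g (Y j ω) ∂P := by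
  set F := Function.update f j g
  have hF : ∀ i, Measurable (F i) := fun i ↦ by
    by_cases hi : i = j
    · subst hi
      simpa [F] using hg
    · simpa [F, hi] using hf i
  have hoff : ∀ i ∈ s, F i = f i := fun i hi ↦
    Function.update_of_ne (ne_of_mem_of_not_mem hi hj) _ _
  have hω : ∀ ω, ∏ i ∈ insert j s, F i (Y i ω) = (∏ i ∈ s, f i (Y i ω)) * g (Y j ω) := fun ω ↦ by
    rw [prod_insert hj, mul_comm, prod_congr rfl fun i hi ↦ congrFun (hoff i hi) (Y i ω)]
    simp [F]
  have hint : ∏ i ∈ insert j s, ∫⁻ ω, F i (Y i ω) ∂P =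
      (∏ i ∈ s, ∫⁻ ω, f i (Y i ω) ∂P) * ∫⁻ ω, g (Y j ω) ∂P := by
    rw [prod_insert hj, mul_comm, prod_congr rfl fun i hi ↦ by rw [hoff i hi]]
    simp [F]
  simpa only [hω, hint] using lintegral_prod_eq_prod_lintegral_of_indepFun (insert j s)
    (fun i ω ↦ F i (Y i ω)) (hY.comp F hF) fun i ↦ (hF i).comp (hYm i)

theorem lintegral_ite_eq_of_indepFun {V X : Ω → ℕ} (hV : Measurable V) (hX : Measurable X)
    (hVX : IndepFun V X P) (n : ℕ) (c : ℝ≥0∞) :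
    ∫⁻ x, (if V x = 1 ∧ X x ≤ n then 0 else if V x = 1 then 1 else c) ∂P =
      P {x | V x = 1} * P {x | X x ≤ n}ᶜ + P {x | V x = 1}ᶜ * c := by
  have hA : MeasurableSet {x | V x = 1} := hV (measurableSet_singleton 1)
  have hB : MeasurableSet {x | X x ≤ n} := hX measurableSet_Iic
  have hsplit : (fun x ↦ if V x = 1 ∧ X x ≤ n then 0 else if V x = 1 then 1 else c) =
      fun x ↦ ({x | V x = 1} ∩ {x | X x ≤ n}ᶜ).indicator 1 x +
        {x | V x = 1}ᶜ.indicator (fun _ ↦ c) x := by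
    ext x
    by_cases h1 : V x = 1 <;> by_cases h2 : X x ≤ n <;> simp [h1, h2]
  rw [hsplit, lintegral_add_left (measurable_one.indicator (hA.inter hB.compl)),
    lintegral_indicator_one (hA.inter hB.compl), lintegral_indicator_const hA.compl, mul_comm c]
  exact congrArg (· + _) (hVX.measure_inter_preimage_eq_mul {1} {k | k ≤ n}ᶜ
    (measurableSet_singleton 1) measurableSet_Iic.compl)

theorem tendsto_measureReal_le_atTop [IsProbabilityMeasure P] (X : Ω → ℕ) :
    Tendsto (fun j ↦ P.real {x | X x ≤ j}) atTop (𝓝 1) := by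
  have hunion : ⋃ j, {x | X x ≤ j} = Set.univ :=
    Set.eq_univ_of_forall fun x ↦ Set.mem_iUnion.2 ⟨X x, le_refl (X x)⟩
  have h := tendsto_measure_iUnion_atTop (μ := P) (s := fun j ↦ {x | X x ≤ j})
    fun i j hij x (hx : X x ≤ i) ↦ hx.trans hij
  rw [hunion, measure_univ] at h
  exact (ENNReal.tendsto_toReal one_ne_top).comp h

end ProbabilityTheory

namespace Nat

theorem sInf_pos_eq_zero_iff {s : ℕ → Prop} : sInf {r | 1 ≤ r ∧ s r} = 0 ↔ ∀ r, 1 ≤ r → ¬ s r := by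
  simp [Nat.sInf_eq_zero, Set.eq_empty_iff_forall_notMem]

theorem sInf_pos_eq_succ_iff {s : ℕ → Prop} {m : ℕ} :
    sInf {r | 1 ≤ r ∧ s r} = m + 1 ↔ s (m + 1) ∧ ∀ i ∈ Icc 1 m, ¬ s i := by
  constructor
  · intro h
    have hne : {r | 1 ≤ r ∧ s r}.Nonempty := Nat.nonempty_of_pos_sInf (by omega)
    refine ⟨h ▸ (Nat.sInf_mem hne).2, fun i hi hsi ↦ ?_⟩
    have := Nat.sInf_le (s := {r | 1 ≤ r ∧ s r}) ⟨(mem_Icc.1 hi).1, hsi⟩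
    simp only [mem_Icc] at hi
    omega
  · rintro ⟨hs, hbefore⟩
    refine le_antisymm (Nat.sInf_le ⟨by omega, hs⟩) (le_csInf ⟨m + 1, by omega, hs⟩ ?_)
    rintro r ⟨hr, hsr⟩
    by_contra! hlt
    exact hbefore r (mem_Icc.2 ⟨hr, by omega⟩) hsr

end Nat

theorem prod_Icc_ite_mul_ite_eq {M : Type*} [CommMonoidWithZero M] (s : ℕ → Prop)
    [DecidablePred s] (f : ℕ → M) (m : ℕ) :
    (∏ i ∈ Icc 1 m, if s i then 0 else f i) * (if s (m + 1) then 1 else 0) =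
      if sInf {r | 1 ≤ r ∧ s r} = m + 1 then ∏ i ∈ Icc 1 m, f i else 0 := by
  by_cases hfirst : sInf {r | 1 ≤ r ∧ s r} = m + 1
  · obtain ⟨hs, hbefore⟩ := Nat.sInf_pos_eq_succ_iff.1 hfirst
    rw [if_pos hfirst, if_pos hs, mul_one]
    exact prod_congr rfl fun i hi ↦ if_neg (hbefore i hi)
  · rw [if_neg hfirst]
    by_cases hs : s (m + 1)
    · obtain ⟨i, hi, hsi⟩ : ∃ i ∈ Icc 1 m, s i := by
        by_contra! h
        exact hfirst (Nat.sInf_pos_eq_succ_iff.2 ⟨hs, h⟩)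
      rw [prod_eq_zero (f := fun i ↦ if s i then 0 else f i) hi (if_pos hsi), zero_mul]
    · rw [if_neg hs, mul_zero]

theorem zpow_neg_card_filter_eq_prod {G₀ : Type*} [CommGroupWithZero G₀] (z : G₀) (s : Finset ℕ)
    {w : ℕ → ℕ} (hw : ∀ i, w i ≤ 1) :
    z ^ (-(#{i ∈ s | w i = 0} : ℤ)) = ∏ i ∈ s, if w i = 1 then 1 else z⁻¹ := by
  have hfilter : {i ∈ s | w i = 0} = {i ∈ s | ¬ w i = 1} :=
    filter_congr fun i _ ↦ by have := hw i; omega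
  rw [prod_ite, prod_const_one, one_mul, prod_const, hfilter, zpow_neg, zpow_natCast, inv_pow]

section FirstSuccess

variable {Ω α : Type*} {Y : ℕ → Ω → α} {S : ℕ → Set α}

/-- This is `0` (as `sInf ∅ = 0`) when no trial `r ≥ 1` succeeds. -/
noncomputable def firstSuccess (Y : ℕ → Ω → α) (S : ℕ → Set α) (ω : Ω) : ℕ :=
  sInf {r | 1 ≤ r ∧ Y r ω ∈ S r}

theorem prod_Ico_firstSuccess_eq_tsum {ω : Ω} (hω : firstSuccess Y S ω ≠ 0)
    (f : ℕ → α → ℝ≥0∞) :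
    ∏ i ∈ Ico 1 (firstSuccess Y S ω), f i (Y i ω) =
      ∑' m, (∏ i ∈ Icc 1 m, (S i)ᶜ.indicator (f i) (Y i ω)) *
        (S (m + 1)).indicator 1 (Y (m + 1) ω) := by
  classical
  obtain ⟨n, hn⟩ := Nat.exists_eq_add_one_of_ne_zero hω
  unfold firstSuccess at hn ⊢
  simp only [Set.indicator_apply, Set.mem_compl_iff, ite_not, Pi.one_apply,
    prod_Icc_ite_mul_ite_eq (fun i ↦ Y i ω ∈ S i)]
  rw [tsum_eq_single n fun m hm ↦ if_neg (by omega), if_pos hn, hn, Ico_add_one_right_eq_Icc]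

variable [MeasurableSpace Ω] [MeasurableSpace α] {P : Measure Ω}

theorem ae_firstSuccess_ne_zero (hY : iIndepFun Y P) (hYm : ∀ i, Measurable (Y i))
    (hS : ∀ i, MeasurableSet (S i)) (hsum : ∑' i, P (Y i ⁻¹' S i) = ∞) :
    ∀ᵐ ω ∂P, firstSuccess Y S ω ≠ 0 := by
  have := hY.isProbabilityMeasure
  have hset : iIndepSet (fun i ↦ Y i ⁻¹' S i) P :=
    iIndep_comap_mem_iff.1 (hY.comp (fun i y ↦ y ∈ S i) fun i ↦ measurable_mem.2 (hS i)).iIndep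
  have hmeas : ∀ i, MeasurableSet (Y i ⁻¹' S i) := fun i ↦ hYm i (hS i)
  filter_upwards [(mem_ae_iff_prob_eq_one (MeasurableSet.measurableSet_limsup hmeas)).2
    (measure_limsup_eq_one hmeas hset hsum)] with ω hω
  obtain ⟨r, hr, hsucc⟩ := (mem_limsup_iff_frequently_mem.1 hω).forall_exists_of_atTop 1
  exact fun h0 ↦ Nat.sInf_pos_eq_zero_iff.1 h0 r hr hsucc

theorem measurable_prod_Icc_indicator_mul_indicator (hYm : ∀ i, Measurable (Y i))
    (hS : ∀ i, MeasurableSet (S i)) {f : ℕ → α → ℝ≥0∞} (hf : ∀ i, Measurable (f i)) (m : ℕ) :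
    Measurable fun ω ↦
      (∏ i ∈ Icc 1 m, (S i)ᶜ.indicator (f i) (Y i ω)) * (S (m + 1)).indicator 1 (Y (m + 1) ω) :=
  (Finset.measurable_prod _ fun i _ ↦ ((hf i).indicator (hS i).compl).comp (hYm i)).mul
    ((measurable_one.indicator (hS _)).comp (hYm _))

theorem aemeasurable_prod_Ico_firstSuccess (hYm : ∀ i, Measurable (Y i))
    (hS : ∀ i, MeasurableSet (S i)) (h0 : ∀ᵐ ω ∂P, firstSuccess Y S ω ≠ 0)
    {f : ℕ → α → ℝ≥0∞} (hf : ∀ i, Measurable (f i)) :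
    AEMeasurable (fun ω ↦ ∏ i ∈ Ico 1 (firstSuccess Y S ω), f i (Y i ω)) P :=
  (Measurable.tsum (measurable_prod_Icc_indicator_mul_indicator hYm hS hf)).aemeasurable.congr
    (h0.mono fun _ hω ↦ (prod_Ico_firstSuccess_eq_tsum hω f).symm)

theorem lintegral_prod_Ico_firstSuccess (hY : iIndepFun Y P) (hYm : ∀ i, Measurable (Y i))
    (hS : ∀ i, MeasurableSet (S i)) (h0 : ∀ᵐ ω ∂P, firstSuccess Y S ω ≠ 0)
    {f : ℕ → α → ℝ≥0∞} (hf : ∀ i, Measurable (f i)) :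
    ∫⁻ ω, ∏ i ∈ Ico 1 (firstSuccess Y S ω), f i (Y i ω) ∂P =
      ∑' m, (∏ i ∈ Icc 1 m, ∫⁻ ω, (S i)ᶜ.indicator (f i) (Y i ω) ∂P) *
        P (Y (m + 1) ⁻¹' S (m + 1)) := by
  rw [lintegral_congr_ae (h0.mono fun _ hω ↦ prod_Ico_firstSuccess_eq_tsum hω f),
    lintegral_tsum fun m ↦ (measurable_prod_Icc_indicator_mul_indicator hYm hS hf m).aemeasurable]
  refine tsum_congr fun m ↦ ?_
  rw [lintegral_prod_mul_eq_of_iIndepFun hY hYm (by simp)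
    (fun i ↦ (hf i).indicator (hS i).compl) (measurable_one.indicator (hS _)),
    ← lintegral_indicator_one (hYm _ (hS _))]
  rfl

end FirstSuccess

section RenewalTerm

/-- `renewalTerm p c q m = E[c ^ J; R = m + 1]`. -/
def renewalTerm (p c : ℝ) (q : ℕ → ℝ) (m : ℕ) : ℝ :=
  p * q (m + 1) * ∏ i ∈ Icc 1 m, (p * (1 - q i) + (1 - p) * c)

variable {p c : ℝ} {q : ℕ → ℝ}

theorem renewalFactor_nonneg (hp : p ∈ Set.Icc 0 1) {x : ℝ} (hx : x ≤ 1) (hc : 0 ≤ c) :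
    0 ≤ p * (1 - x) + (1 - p) * c :=
  add_nonneg (mul_nonneg hp.1 (by linarith)) (mul_nonneg (by linarith [hp.2]) hc)

theorem renewalTerm_nonneg (hp : p ∈ Set.Icc 0 1) (hq : ∀ i, q i ∈ Set.Icc 0 1) (hc : 0 ≤ c)
    (m : ℕ) : 0 ≤ renewalTerm p c q m :=
  mul_nonneg (mul_nonneg hp.1 (hq _).1) (prod_nonneg fun i _ ↦ renewalFactor_nonneg hp (hq i).2 hc)

theorem summable_prod_Icc_of_tendsto_lt_one {a : ℕ → ℝ} {L : ℝ} (ha : ∀ i, 0 ≤ a i)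
    (h : Tendsto a atTop (𝓝 L)) (hL : L < 1) : Summable fun m ↦ ∏ i ∈ Icc 1 m, a i := by
  obtain ⟨θ, hLθ, hθ1⟩ := exists_between hL
  refine summable_of_ratio_norm_eventually_le hθ1 ?_
  filter_upwards [(tendsto_add_atTop_nat 1).eventually (h.eventually (eventually_le_nhds hLθ))]
    with n hn
  rw [prod_Icc_succ_top (by omega), norm_mul, mul_comm, Real.norm_of_nonneg (ha _)]
  gcongr

theorem summable_renewalTerm (hp : p ∈ Set.Icc 0 1) (hq : ∀ i, q i ∈ Set.Icc 0 1) (hc : 0 ≤ c)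
    (hqlim : Tendsto q atTop (𝓝 1)) (hpc : (1 - p) * c < 1) : Summable (renewalTerm p c q) := by
  have hfactor : ∀ i, 0 ≤ p * (1 - q i) + (1 - p) * c := fun i ↦ renewalFactor_nonneg hp (hq i).2 hc
  have hlim : Tendsto (fun i ↦ p * (1 - q i) + (1 - p) * c) atTop (𝓝 ((1 - p) * c)) := by
    simpa using (((tendsto_const_nhds (x := (1 : ℝ))).sub hqlim).const_mul p).add_const _
  refine (summable_prod_Icc_of_tendsto_lt_one hfactor hlim hpc).of_nonneg_of_le
    (renewalTerm_nonneg hp hq hc) fun m ↦ ?_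
  exact mul_le_of_le_one_left (prod_nonneg fun i _ ↦ hfactor i) (mul_le_one₀ hp.2 (hq _).1 (hq _).2)

variable {z : ℝ} (q) (m : ℕ)

theorem zpow_mul_prod_eq_renewalTerm (hz : z ≠ 0) :
    z ^ (1 - ((m : ℤ) + 1)) * (p * q (m + 1)) * ∏ i ∈ Icc 1 m, (1 - p + p * z * (1 - q i)) =
      renewalTerm p z⁻¹ q m := by
  have hfactor : ∀ i, 1 - p + p * z * (1 - q i) = z * (p * (1 - q i) + (1 - p) * z⁻¹) :=
    fun i ↦ by
      field_simp
      ring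
  simp_rw [renewalTerm, hfactor, prod_mul_distrib, prod_const, Nat.card_Icc, Nat.add_sub_cancel,
    show (1 : ℤ) - (m + 1) = -m by ring, zpow_neg, zpow_natCast]
  generalize ∏ i ∈ Icc 1 m, (p * (1 - q i) + (1 - p) * z⁻¹) = x
  field_simp

theorem renewalTerm_eq_pow_mul_prod (hz : z ≠ 0) (hc : 1 - p + p * z ≠ 0) :
    renewalTerm p z⁻¹ q m =
      ((1 - p + p * z) / z) ^ (m + 1) * (p * z / (1 - p + p * z)) * q (m + 1) *
        ∏ i ∈ Icc 1 m, (1 - p * z / (1 - p + p * z) * q i) := by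
  have hfactor : ∀ i, p * (1 - q i) + (1 - p) * z⁻¹ =
      (1 - p + p * z) / z * (1 - p * z / (1 - p + p * z) * q i) := fun i ↦ by
    field_simp
    ring
  simp_rw [renewalTerm, hfactor, prod_mul_distrib, prod_const, Nat.card_Icc, Nat.add_sub_cancel,
    pow_succ]
  generalize ∏ i ∈ Icc 1 m, (1 - p * z / (1 - p + p * z) * q i) = x
  field_simp

theorem zpow_neg_mul_eq_pow_mul (hp : p ≠ 0) (hz : z ≠ 0) (hc : 1 - p + p * z ≠ 0) (x : ℝ) :
    (p * z / (1 - p + p * z) / p) ^ (-((m : ℤ) + 1)) * (p * z / (1 - p + p * z) * q (m + 1) * x) =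
      ((1 - p + p * z) / z) ^ (m + 1) * (p * z / (1 - p + p * z)) * q (m + 1) * x := by
  rw [show p * z / (1 - p + p * z) / p = ((1 - p + p * z) / z)⁻¹ by field_simp,
    show -((m : ℤ) + 1) = -((m + 1 : ℕ) : ℤ) by push_cast; ring, zpow_neg, zpow_natCast, inv_pow,
    inv_inv]
  ring

end RenewalTerm

def renewalSet (r : ℕ) : Set (ℕ × ℕ) := {y | y.1 = 1 ∧ y.2 ≤ r}

section RenewalModel

variable {Ω : Type*} [MeasurableSpace Ω] {P : Measure Ω} [IsProbabilityMeasure P] {p : ℝ}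
  {W ξ : ℕ → Ω → ℕ} {q : ℕ → ℝ}

theorem measure_renewalSet (hind : iIndepFun (Sum.elim W ξ) P)
    (hW : ∀ i, P {x | W i x = 1} = ENNReal.ofReal p) (hξ : ∀ i j, P.real {x | ξ i x ≤ j} = q j)
    (hp : 0 ≤ p) (i : ℕ) :
    P ((fun x ↦ (W i x, ξ i x)) ⁻¹' renewalSet i) = ENNReal.ofReal (p * q i) := by
  rw [ENNReal.ofReal_mul hp, ← hW, ← hξ i i, ofReal_measureReal]
  exact (hind.indepFun Sum.inl_ne_inr).measure_inter_preimage_eq_mul {1} {k | k ≤ i}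
    (measurableSet_singleton 1) measurableSet_Iic

theorem lintegral_renewalSet_compl (hWm : ∀ i, Measurable (W i)) (hξm : ∀ i, Measurable (ξ i))
    (hind : iIndepFun (Sum.elim W ξ) P)
    (hW : ∀ i, P {x | W i x = 1} = ENNReal.ofReal p) (hξ : ∀ i j, P.real {x | ξ i x ≤ j} = q j)
    (hp : 0 ≤ p) {c : ℝ} (hc : 0 ≤ c) (i : ℕ) :
    ∫⁻ x, (renewalSet i)ᶜ.indicator (fun y ↦ if y.1 = 1 then 1 else ENNReal.ofReal c)
      (W i x, ξ i x) ∂P = ENNReal.ofReal (p * (1 - q i) + (1 - p) * c) := by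
  have hp1 : p ≤ 1 := ENNReal.ofReal_le_one.1 (hW 0 ▸ prob_le_one)
  have hq : q i ∈ Set.Icc 0 1 := hξ i i ▸ ⟨measureReal_nonneg, measureReal_le_one⟩
  have hA : MeasurableSet {x | W i x = 1} := hWm i (measurableSet_singleton 1)
  have hB : MeasurableSet {x | ξ i x ≤ i} := hξm i measurableSet_Iic
  simp only [Set.indicator_apply, renewalSet, Set.mem_compl_iff, Set.mem_ofPred_eq, ite_not]
  rw [lintegral_ite_eq_of_indepFun (hWm i) (hξm i) (hind.indepFun Sum.inl_ne_inr),
    prob_compl_eq_one_sub hA, prob_compl_eq_one_sub hB, hW, ← ofReal_measureReal, hξ i i,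
    ENNReal.ofReal_add (by nlinarith [hq.2]) (by nlinarith), ENNReal.ofReal_mul hp,
    ENNReal.ofReal_mul (by linarith), ENNReal.ofReal_sub _ hp, ENNReal.ofReal_sub _ hq.1,
    ENNReal.ofReal_one]

theorem ae_firstSuccess_renewalSet_ne_zero (hWm : ∀ i, Measurable (W i))
    (hξm : ∀ i, Measurable (ξ i)) (hind : iIndepFun (Sum.elim W ξ) P)
    (hW : ∀ i, P {x | W i x = 1} = ENNReal.ofReal p) (hξ : ∀ i j, P.real {x | ξ i x ≤ j} = q j)
    (hp : 0 < p) (hq : Tendsto q atTop (𝓝 1)) :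
    ∀ᵐ x ∂P, firstSuccess (fun i x ↦ (W i x, ξ i x)) renewalSet x ≠ 0 := by
  refine ae_firstSuccess_ne_zero (hind.prodMk_sumElim hWm hξm) (fun i ↦ (hWm i).prodMk (hξm i))
    (fun _ ↦ .of_discrete) ?_
  simp_rw [measure_renewalSet hind hW hξ hp.le]
  by_contra hfin
  have hlim := tendsto_nhds_unique (ENNReal.tendsto_ofReal (hq.const_mul p))
    (ENNReal.tendsto_atTop_zero_of_tsum_ne_top hfin)
  rw [mul_one, ENNReal.ofReal_eq_zero] at hlim
  linarith

theorem integrable_and_hasSum_renewalTerm (hWm : ∀ i, Measurable (W i))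
    (hξm : ∀ i, Measurable (ξ i)) (hind : iIndepFun (Sum.elim W ξ) P)
    (hW : ∀ i, P {x | W i x = 1} = ENNReal.ofReal p) (hξ : ∀ i j, P.real {x | ξ i x ≤ j} = q j)
    (hp : 0 < p) (hq : Tendsto q atTop (𝓝 1)) {c : ℝ} (hc : 0 ≤ c) (hpc : (1 - p) * c < 1) :
    let F := fun x ↦ ∏ i ∈ Ico 1 (firstSuccess (fun i x ↦ (W i x, ξ i x)) renewalSet x),
      if W i x = 1 then 1 else c
    Integrable F P ∧ HasSum (renewalTerm p c q) (∫ x, F x ∂P) := by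
  intro F
  have hp1 : p ≤ 1 := ENNReal.ofReal_le_one.1 (hW 0 ▸ prob_le_one)
  have hq01 : ∀ i, q i ∈ Set.Icc 0 1 := fun i ↦
    hξ i i ▸ ⟨measureReal_nonneg, measureReal_le_one⟩
  have ht0 := renewalTerm_nonneg ⟨hp.le, hp1⟩ hq01 hc
  have ht := summable_renewalTerm ⟨hp.le, hp1⟩ hq01 hc hq hpc
  have hYind := hind.prodMk_sumElim hWm hξm
  have hYm : ∀ i, Measurable fun x ↦ (W i x, ξ i x) := fun i ↦ (hWm i).prodMk (hξm i)
  have hR0 := ae_firstSuccess_renewalSet_ne_zero hWm hξm hind hW hξ hp hq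
  have hf : ∀ i : ℕ, Measurable fun y : ℕ × ℕ ↦ if y.1 = 1 then 1 else ENNReal.ofReal c :=
    fun _ ↦ measurable_of_countable _
  have hFm := aemeasurable_prod_Ico_firstSuccess hYm (fun _ ↦ .of_discrete) hR0 hf
  have hlint : ∫⁻ x, ∏ i ∈ Ico 1 (firstSuccess (fun i x ↦ (W i x, ξ i x)) renewalSet x),
      (if W i x = 1 then 1 else ENNReal.ofReal c) ∂P =
        ENNReal.ofReal (∑' m, renewalTerm p c q m) := by
    rw [lintegral_prod_Ico_firstSuccess hYind hYm (fun _ ↦ .of_discrete) hR0 hf,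
      ENNReal.ofReal_tsum_of_nonneg ht0 ht]
    refine tsum_congr fun m ↦ ?_
    simp_rw [lintegral_renewalSet_compl hWm hξm hind hW hξ hp.le hc,
      measure_renewalSet hind hW hξ hp.le]
    have hfactor : ∀ i, 0 ≤ p * (1 - q i) + (1 - p) * c := fun i ↦
      renewalFactor_nonneg ⟨hp.le, hp1⟩ (hq01 i).2 hc
    rw [← ENNReal.ofReal_prod_of_nonneg fun i _ ↦ hfactor i,
      ← ENNReal.ofReal_mul (prod_nonneg fun i _ ↦ hfactor i), mul_comm]
    rfl
  have hfin := hlint ▸ ENNReal.ofReal_ne_top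
  have hFF : F = fun x ↦ (∏ i ∈ Ico 1 (firstSuccess (fun i x ↦ (W i x, ξ i x)) renewalSet x),
      if W i x = 1 then 1 else ENNReal.ofReal c).toReal := by
    funext x
    simp only [F, toReal_prod, apply_ite ENNReal.toReal, toReal_one, toReal_ofReal hc]
  rw [hFF, integral_toReal hFm (ae_lt_top' hFm hfin), hlint, toReal_ofReal (tsum_nonneg ht0)]
  exact ⟨integrable_toReal_of_lintegral_ne_top hFm hfin, ht.hasSum⟩

end RenewalModel

theorem stmt7_general
    {Ω : Type*} [MeasurableSpace Ω] (P : MeasureTheory.Measure Ω)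
    [MeasureTheory.IsProbabilityMeasure P]
    (p : ℝ) (hp : p ∈ Set.Ioo (0 : ℝ) 1)
    (ξ W : ℕ → Ω → ℕ) (q : ℕ → ℝ)
    (hξmeas : ∀ i, Measurable (ξ i)) (hWmeas : ∀ i, Measurable (W i))
    (hWval : ∀ i x, W i x ≤ 1)
    (hξid : ∀ i j, ProbabilityTheory.IdentDistrib (ξ i) (ξ j) P P)
    (hWlaw : ∀ i, P {x | W i x = 1} = ENNReal.ofReal p)
    (hq : ∀ j, (P {x | ξ 1 x ≤ j}).toReal = q j)
    (hindep : ProbabilityTheory.iIndepFun (Sum.elim W ξ) P)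
    (R J : Ω → ℕ)
    (hR : R = fun x => sInf {r : ℕ | 1 ≤ r ∧ W r x = 1 ∧ ξ r x ≤ r})
    (hJ : J = fun x => ((Finset.Ico 1 (R x)).filter fun i => W i x = 0).card)
    (z phat : ℝ) (hz : 1 - p < z) (hphat : phat = p * z / (1 - p + p * z)) :
    phat ∈ Set.Ioo (0 : ℝ) 1 ∧
    MeasureTheory.Integrable (fun x => z ^ (-(J x : ℤ))) P ∧
    (∫ x, z ^ (-(J x : ℤ)) ∂P =
      ∑' r : ℕ, (phat / p) ^ (-((r : ℤ) + 1)) *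
        (phat * q (r + 1) * ∏ i ∈ Finset.Icc 1 r, (1 - phat * q i))) ∧
    Summable (fun r : ℕ =>
      z ^ (1 - ((r : ℤ) + 1)) * (p * q (r + 1)) *
        ∏ i ∈ Finset.Icc 1 r, (1 - p + p * z * (1 - q i))) ∧
    (∑' r : ℕ,
        z ^ (1 - ((r : ℤ) + 1)) * (p * q (r + 1)) *
          ∏ i ∈ Finset.Icc 1 r, (1 - p + p * z * (1 - q i)) =
      ∑' r : ℕ, ((1 - p + p * z) / z) ^ (r + 1) * (p * z / (1 - p + p * z)) * q (r + 1) *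
        ∏ i ∈ Finset.Icc 1 r, (1 - phat * q i)) := by
  obtain ⟨hp0, hp1⟩ := hp
  subst hR hphat
  have hz0 : 0 < z := by linarith
  have hc : 0 < 1 - p + p * z := by nlinarith
  have hξ : ∀ i j, P.real {x | ξ i x ≤ j} = q j := fun i j ↦ by
    rw [← hq j, measureReal_def]
    exact congrArg ENNReal.toReal ((hξid i 1).measure_mem_eq measurableSet_Iic)
  have hqlim : Tendsto q atTop (𝓝 1) := by
    simpa only [measureReal_def, hq] using tendsto_measureReal_le_atTop (P := P) (ξ 1)
  have hzpowJ : (fun x ↦ z ^ (-(J x : ℤ))) = fun x ↦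
      ∏ i ∈ Ico 1 (firstSuccess (fun i x ↦ (W i x, ξ i x)) renewalSet x),
        if W i x = 1 then 1 else z⁻¹ := by
    funext x
    rw [hJ, zpow_neg_card_filter_eq_prod z _ (hWval · x)]
    rfl
  obtain ⟨hint, hsum⟩ := integrable_and_hasSum_renewalTerm hWmeas hξmeas hindep hWlaw hξ
    hp0 hqlim (inv_nonneg.2 hz0.le) (by rw [← div_eq_mul_inv, div_lt_one hz0]; linarith)
  have hzne : z ≠ 0 := hz0.ne'
  refine ⟨⟨by positivity, by rw [div_lt_one hc]; linarith⟩, hzpowJ ▸ hint, ?_, ?_, ?_⟩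
  · rw [hzpowJ, ← hsum.tsum_eq]
    exact tsum_congr fun m ↦ (renewalTerm_eq_pow_mul_prod q m hzne hc.ne').trans
      (zpow_neg_mul_eq_pow_mul q m hp0.ne' hzne hc.ne' _).symm
  · exact hsum.summable.congr fun m ↦ (zpow_mul_prod_eq_renewalTerm q m hzne).symm
  · exact tsum_congr fun m ↦
      (zpow_mul_prod_eq_renewalTerm q m hzne).trans (renewalTerm_eq_pow_mul_prod q m hzne hc.ne')

/-- In the renewal construction, for every `z > 1 − p`, with
`p̂ = p·z/(1 − p + p·z)`, the transform `E[z^{−J_p}]` is finite and equals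
`E[(p̂/p)^{−R_{p̂}}]`, where `R_{p̂}` has `P(R_{p̂} = r) = p̂·q r·∏_{i=1}^{r−1}(1 − p̂·q i)`;
equivalently, as convergent series,
`∑_{r≥1} z^{1−r}·p·q r·∏_{i=1}^{r−1}(1 − p + p·z·(1 − q i))
  = ∑_{r≥1} ((1−p+pz)/z)^r·(pz/(1−p+pz))·q r·∏_{i=1}^{r−1}(1 − p̂·q i) < ∞`. -/
theorem stmt7
    {Ω : Type*} [MeasurableSpace Ω] (P : MeasureTheory.Measure Ω)
    [MeasureTheory.IsProbabilityMeasure P]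
    (p : ℝ) (hp : p ∈ Set.Ioo (0 : ℝ) 1)
    (ξ W : ℕ → Ω → ℕ) (q : ℕ → ℝ)
    (hξmeas : ∀ i, Measurable (ξ i)) (hWmeas : ∀ i, Measurable (W i))
    (hξpos : ∀ i x, 1 ≤ ξ i x) (hWval : ∀ i x, W i x ≤ 1)
    (hξid : ∀ i j, ProbabilityTheory.IdentDistrib (ξ i) (ξ j) P P)
    (hWlaw : ∀ i, P {x | W i x = 1} = ENNReal.ofReal p)
    (hq : ∀ j, (P {x | ξ 1 x ≤ j}).toReal = q j)
    (hindep : ProbabilityTheory.iIndepFun (Sum.elim W ξ) P)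
    (R J : Ω → ℕ)
    (hR : R = fun x => sInf {r : ℕ | 1 ≤ r ∧ W r x = 1 ∧ ξ r x ≤ r})
    (hJ : J = fun x => ((Finset.Ico 1 (R x)).filter fun i => W i x = 0).card)
    (z phat : ℝ) (hz : 1 - p < z) (hphat : phat = p * z / (1 - p + p * z)) :
    phat ∈ Set.Ioo (0 : ℝ) 1 ∧
    MeasureTheory.Integrable (fun x => z ^ (-(J x : ℤ))) P ∧
    (∫ x, z ^ (-(J x : ℤ)) ∂P =
      ∑' r : ℕ, (phat / p) ^ (-((r : ℤ) + 1)) *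
        (phat * q (r + 1) * ∏ i ∈ Finset.Icc 1 r, (1 - phat * q i))) ∧
    Summable (fun r : ℕ =>
      z ^ (1 - ((r : ℤ) + 1)) * (p * q (r + 1)) *
        ∏ i ∈ Finset.Icc 1 r, (1 - p + p * z * (1 - q i))) ∧
    (∑' r : ℕ,
        z ^ (1 - ((r : ℤ) + 1)) * (p * q (r + 1)) *
          ∏ i ∈ Finset.Icc 1 r, (1 - p + p * z * (1 - q i)) =
      ∑' r : ℕ, ((1 - p + p * z) / z) ^ (r + 1) * (p * z / (1 - p + p * z)) * q (r + 1) *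
        ∏ i ∈ Finset.Icc 1 r, (1 - phat * q i)) :=
  stmt7_general P p hp ξ W q hξmeas hWmeas hWval hξid hWlaw hq hindep R J hR hJ z phat hz hphat
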